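/- arXiv:2306.06444 — 7 statements merged into one kernel-verified Lean document; each statement's English description precedes it below -/
import Mathlib

section
/- Let {P_n}_{n≥0} be a monic OPS with respect to a linear functional u_0 on ℂ[x], and set Q_n := (n+1)^{-1} D_ω P_{n+1}. Then {Q_n}_{n≥0} is an OPS (with respect to some linear functional) if and only if there exist sequences of complex numbers (a_n)_{n≥0} and (b_n)_{n≥0} such that P_{n+2} = Q_{n+2} + a_{n+1} Q_{n+1} + b_n Q_n for all n ≥ 0 and P_1 = Q_1 + a_0. -/
open Polynomial

/-- The Hahn difference operator `D_ω` acting on polynomials: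
`(D_ω f)(x) = (f(x+ω) − f(x))/ω`. -/
noncomputable def Dw (ω : ℂ) (f : Polynomial ℂ) : Polynomial ℂ :=
  C ω⁻¹ * (f.comp (X + C ω) - f)

/-- A monic polynomial sequence: each `P n` is monic of degree `n`. -/
def MonicPS (P : ℕ → Polynomial ℂ) : Prop :=
  ∀ n, (P n).Monic ∧ (P n).natDegree = n

/-- Three-term recurrence with coefficients `β`, `γ` (where `γ (n+1)` is used). -/
def TTR (P : ℕ → Polynomial ℂ) (β γ : ℕ → ℂ) : Prop :=
  P 0 = 1 ∧ P 1 = X - C (β 0) ∧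
    ∀ n : ℕ, P (n + 2) = (X - C (β (n + 1))) * P (n + 1) - C (γ (n + 1)) * P n

/-- Orthogonality of a polynomial sequence with respect to a linear functional. -/
def IsOPSwrt (P : ℕ → Polynomial ℂ) (u : Polynomial ℂ →ₗ[ℂ] ℂ) : Prop :=
  (∀ n m, n ≠ m → u (P n * P m) = 0) ∧ ∀ n, u (P n * P n) ≠ 0

/-!
Everything rests on a Pearson-type identity: if `v` annihilates `D_ω P_{m+2}` for every `m`,
then `⟨u₀, P₁²⟩ ⟨v, D_ω f⟩ = ⟨v, D_ω P₁⟩ ⟨u₀, P₁ f⟩` for all `f`, since both sides are linear in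
`f` and agree on the basis `(P_n)`. For `f = P_{n+1} h` with `deg h < n` the right side vanishes,
and the Leibniz rule for `D_ω` turns this into a linear relation between `⟨v, P_{n+1} D_ω h⟩` and
`⟨v, h(x+ω) Q_n⟩`.

If `Q` is orthogonal for `v`, taking `h = P_{j+1}` gives `⟨v, P_{n+2} Q_j⟩ = 0` for `j < n`, so
the expansion of `P_{n+2}` in the basis `(Q_k)` has only three terms. Conversely, given the
relation, let `v` be the coordinate of `Q_0` in the basis `(Q_k)`; taking `h = g(x-ω)`, induction
on `deg g` gives `⟨v, g Q_n⟩ = 0` whenever `deg g < n`. If `⟨v, Q_n²⟩ = 0`, applying `D_ω` to the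
three-term recurrence of `P` gives `⟨v, Q_{n+1}²⟩ = 0`, and then the identity at
`f = P_{n+2} P_{n+1}` forces `⟨u₀, P_{n+2}²⟩ = 0`.
-/

theorem Polynomial.taylor_coeff_of_natDegree_le {R : Type*} [Semiring R] {f : R[X]} {k : ℕ}
    (h : f.natDegree ≤ k) (r : R) : (taylor r f).coeff k = f.coeff k := by
  have hd : (hasseDeriv k f).natDegree ≤ 0 := (natDegree_hasseDeriv_le f k).trans (by omega)
  rw [taylor_coeff, eq_C_of_natDegree_le_zero hd, eval_C, hasseDeriv_coeff]
  simp

theorem Polynomial.taylor_coeff_of_natDegree_le_add_one {R : Type*} [Semiring R] {f : R[X]}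
    {m : ℕ} (h : f.natDegree ≤ m + 1) (r : R) :
    (taylor r f).coeff m = f.coeff m + (m + 1) * f.coeff (m + 1) * r := by
  have hd : (hasseDeriv m f).natDegree ≤ 1 := (natDegree_hasseDeriv_le f m).trans (by omega)
  rw [taylor_coeff, eq_X_add_C_of_natDegree_le_one hd]
  simp [hasseDeriv_coeff, add_comm 1 m, Nat.choose_succ_self_right, ← Nat.cast_succ,
    -Nat.cast_add, eval_natCast_mul, add_comm]

section HahnDifference

variable {ω : ℂ}

theorem Dw_add (f g : ℂ[X]) : Dw ω (f + g) = Dw ω f + Dw ω g := by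
  simp only [Dw, add_comp]; ring

theorem Dw_C_mul (c : ℂ) (f : ℂ[X]) : Dw ω (C c * f) = C c * Dw ω f := by
  simp only [Dw, mul_comp, C_comp]; ring

variable (ω) in
@[simps]
noncomputable def Dwₗ : ℂ[X] →ₗ[ℂ] ℂ[X] where
  toFun := Dw ω
  map_add' := Dw_add
  map_smul' c f := by simp only [smul_eq_C_mul, Dw_C_mul, RingHom.id_apply]

theorem Dw_C (c : ℂ) : Dw ω (C c) = 0 := by simp [Dw]

theorem Dw_sub (f g : ℂ[X]) : Dw ω (f - g) = Dw ω f - Dw ω g := by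
  simp only [Dw, sub_comp]; ring

theorem Dw_X_sub_C (hω : ω ≠ 0) (c : ℂ) : Dw ω (X - C c) = 1 := by
  simp [Dw, ← C_mul, inv_mul_cancel₀ hω]

theorem Dw_mul (f g : ℂ[X]) : Dw ω (f * g) = f * Dw ω g + g.comp (X + C ω) * Dw ω f := by
  simp only [Dw, mul_comp]; ring

theorem comp_X_add_C_eq_add_C_mul_Dw (hω : ω ≠ 0) (f : ℂ[X]) :
    f.comp (X + C ω) = f + C ω * Dw ω f := by
  rw [Dw, ← mul_assoc, ← C_mul, mul_inv_cancel₀ hω, C_1, one_mul]; ring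

theorem coeff_Dw_eq_zero {f : ℂ[X]} {k : ℕ} (h : f.natDegree ≤ k) :
    (Dw ω f).coeff k = 0 := by
  rw [Dw, coeff_C_mul, coeff_sub, ← taylor_apply, taylor_coeff_of_natDegree_le h, sub_self,
    mul_zero]

theorem natDegree_Dw_le {f : ℂ[X]} {m : ℕ} (h : f.natDegree ≤ m + 1) :
    (Dw ω f).natDegree ≤ m :=
  natDegree_le_iff_coeff_eq_zero.mpr fun _ hk => coeff_Dw_eq_zero (h.trans hk)

theorem degree_Dw_lt {f : ℂ[X]} {m : ℕ} (h : f.degree < ↑(m + 1)) : (Dw ω f).degree < m := by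
  have hf : f.natDegree ≤ m := natDegree_le_iff_coeff_eq_zero.mpr fun j hj =>
    (degree_lt_iff_coeff_zero f _).mp h j (by omega)
  exact (degree_lt_iff_coeff_zero _ _).mpr fun _ hk => coeff_Dw_eq_zero (hf.trans hk)

theorem coeff_Dw (hω : ω ≠ 0) {f : ℂ[X]} {m : ℕ} (h : f.natDegree ≤ m + 1) :
    (Dw ω f).coeff m = (m + 1) * f.coeff (m + 1) := by
  rw [Dw, coeff_C_mul, coeff_sub, ← taylor_apply, taylor_coeff_of_natDegree_le_add_one h]
  field_simp
  ring

end HahnDifference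

theorem LinearMap.map_C_mul (v : ℂ[X] →ₗ[ℂ] ℂ) (c : ℂ) (p : ℂ[X]) :
    v (C c * p) = c * v p := by
  rw [← smul_eq_C_mul, map_smul, smul_eq_mul]

def IsOrthogonalWrt (P : ℕ → ℂ[X]) (u : ℂ[X] →ₗ[ℂ] ℂ) : Prop :=
  ∀ n m, n ≠ m → u (P n * P m) = 0

namespace MonicPS

variable {P : ℕ → ℂ[X]}

theorem zero_eq_one (hP : MonicPS P) : P 0 = 1 := (hP 0).1.natDegree_eq_zero.mp (hP 0).2

theorem coeff_self (hP : MonicPS P) (n : ℕ) : (P n).coeff n = 1 := by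
  simpa only [(hP n).2] using (hP n).1.coeff_natDegree

theorem isMonicOfDegree (hP : MonicPS P) (n : ℕ) : IsMonicOfDegree (P n) n :=
  ⟨(hP n).2, (hP n).1⟩

theorem degree_eq (hP : MonicPS P) (n : ℕ) : (P n).degree = n := by
  rw [degree_eq_natDegree (hP n).1.ne_zero, (hP n).2]

noncomputable def toSequence (hP : MonicPS P) : Polynomial.Sequence ℂ := ⟨P, hP.degree_eq⟩

noncomputable def basis (hP : MonicPS P) : Module.Basis ℕ ℂ ℂ[X] :=
  hP.toSequence.basis fun n => by simp [toSequence, (hP n).1.leadingCoeff]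

theorem basis_apply (hP : MonicPS P) (n : ℕ) : hP.basis n = P n :=
  Polynomial.Sequence.basis_eq_self _ _ n

theorem span_image_Iio (hP : MonicPS P) (n : ℕ) :
    Submodule.span ℂ (P '' Set.Iio n) = degreeLT ℂ n :=
  hP.toSequence.span_degreeLT fun i _ => by simp [toSequence, (hP i).1.leadingCoeff]

end MonicPS

namespace IsOrthogonalWrt

variable {P : ℕ → ℂ[X]} {u : ℂ[X] →ₗ[ℂ] ℂ}

theorem apply_mul_eq_zero (hP : MonicPS P) (horth : IsOrthogonalWrt P u) {g : ℂ[X]} {n : ℕ}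
    (hg : g.degree < n) : u (g * P n) = 0 := by
  rw [← mem_degreeLT, ← hP.span_image_Iio] at hg
  induction hg using Submodule.span_induction with
  | mem _ h =>
    obtain ⟨k, hk, rfl⟩ := h
    exact horth k n (Set.mem_Iio.mp hk).ne
  | zero => simp
  | add _ _ _ _ hf hg => rw [add_mul, map_add, hf, hg, add_zero]
  | smul _ _ _ hf => rw [smul_mul_assoc, map_smul, hf, smul_zero]

theorem apply_mul_eq_coeff_mul (hP : MonicPS P) (horth : IsOrthogonalWrt P u) {g : ℂ[X]}
    {n : ℕ} (hg : g.natDegree ≤ n) : u (g * P n) = g.coeff n * u (P n * P n) := by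
  have hr : (g - C (g.coeff n) * P n).degree < n := by
    rw [degree_lt_iff_coeff_zero]
    intro k hk
    rcases hk.eq_or_lt with rfl | hk
    · rw [coeff_sub, coeff_C_mul, hP.coeff_self, mul_one, sub_self]
    · rw [coeff_sub, coeff_C_mul, coeff_eq_zero_of_natDegree_lt (hg.trans_lt hk),
        coeff_eq_zero_of_natDegree_lt ((hP n).2.trans_lt hk), mul_zero, sub_zero]
  have := horth.apply_mul_eq_zero hP hr
  rwa [sub_mul, map_sub, mul_assoc, u.map_C_mul, sub_eq_zero] at this

theorem apply_succ_eq_zero (hP : MonicPS P) (horth : IsOrthogonalWrt P u) (m : ℕ) :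
    u (P (m + 1)) = 0 := by
  simpa [hP.zero_eq_one] using horth (m + 1) 0 (by omega)

theorem apply_mul_eq_of_isMonicOfDegree (hP : MonicPS P) (horth : IsOrthogonalWrt P u)
    {g : ℂ[X]} {n : ℕ} (hg : IsMonicOfDegree g n) : u (g * P n) = u (P n * P n) := by
  rw [horth.apply_mul_eq_coeff_mul hP hg.natDegree_eq.le, ← hg.natDegree_eq,
    hg.monic.coeff_natDegree, one_mul]

end IsOrthogonalWrt

namespace IsOPSwrt

variable {P : ℕ → ℂ[X]} {u : ℂ[X] →ₗ[ℂ] ℂ}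

theorem isOrthogonalWrt (hops : IsOPSwrt P u) : IsOrthogonalWrt P u := hops.1

theorem eq_zero_of_forall_apply_mul_eq_zero (hP : MonicPS P) (hops : IsOPSwrt P u) {g : ℂ[X]}
    (hg : ∀ k, u (g * P k) = 0) : g = 0 := by
  by_contra hg0
  have := hops.isOrthogonalWrt.apply_mul_eq_coeff_mul hP le_rfl (g := g)
  rw [hg, coeff_natDegree, eq_comm, mul_eq_zero] at this
  exact this.elim (leadingCoeff_ne_zero.mpr hg0) (hops.2 _)

theorem exists_eq_C_mul_add_C_mul (hP : MonicPS P) (hops : IsOPSwrt P u) {f : ℂ[X]} {n : ℕ}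
    (hf : f.natDegree < n + 2) (hlow : ∀ k < n, u (f * P k) = 0) :
    ∃ a b : ℂ, f = C a * P (n + 1) + C b * P n := by
  refine ⟨u (f * P (n + 1)) / u (P (n + 1) * P (n + 1)), u (f * P n) / u (P n * P n), ?_⟩
  rw [← sub_eq_zero, sub_add_eq_sub_sub]
  refine hops.eq_zero_of_forall_apply_mul_eq_zero hP fun k => ?_
  simp only [sub_mul, map_sub, mul_assoc, u.map_C_mul]
  obtain hk | rfl | rfl | hk : k < n ∨ k = n ∨ k = n + 1 ∨ n + 2 ≤ k := by omega
  · rw [hlow k hk, hops.1 (n + 1) k (by omega), hops.1 n k (by omega)]; ring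
  · rw [hops.1 (k + 1) k (by omega), div_mul_cancel₀ _ (hops.2 k)]; ring
  · rw [hops.1 n (n + 1) (by omega), div_mul_cancel₀ _ (hops.2 (n + 1))]; ring
  · rw [hops.isOrthogonalWrt.apply_mul_eq_zero hP
      (degree_le_natDegree.trans_lt (by exact_mod_cast hf.trans_le hk)),
      hops.1 (n + 1) k (by omega), hops.1 n k (by omega)]
    ring

theorem exists_recurrence (hP : MonicPS P) (hops : IsOPSwrt P u) (n : ℕ) :
    ∃ β γ : ℂ, P (n + 2) = (X - C β) * P (n + 1) - C γ * P n := by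
  have hdeg : (P (n + 1) * X - P (n + 2)).natDegree < n + 2 :=
    ((hP.isMonicOfDegree (n + 1)).mul (isMonicOfDegree_X ℂ)).natDegree_sub_lt (by omega)
      (hP.isMonicOfDegree (n + 2))
  have hlow : ∀ k < n, u ((P (n + 1) * X - P (n + 2)) * P k) = 0 := fun k hk => by
    have hXk : (P k * X).degree < ↑(n + 1) := by
      rw [degree_mul_X, hP.degree_eq]; exact_mod_cast (by omega : k + 1 < n + 1)
    rw [sub_mul, map_sub, show P (n + 1) * X * P k = P k * X * P (n + 1) by ring,
      hops.isOrthogonalWrt.apply_mul_eq_zero hP hXk, hops.1 (n + 2) k (by omega), sub_zero]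
  obtain ⟨β, γ, h⟩ := hops.exists_eq_C_mul_add_C_mul hP hdeg hlow
  exact ⟨β, γ, by linear_combination -h⟩

end IsOPSwrt

section DerivedSequence

variable {ω : ℂ} {P Q : ℕ → ℂ[X]} {u v : ℂ[X] →ₗ[ℂ] ℂ} {a b : ℕ → ℂ}

theorem Dw_succ_eq_C_mul (hQ : ∀ n, Q n = ((n : ℂ) + 1)⁻¹ • Dw ω (P (n + 1))) (n : ℕ) :
    Dw ω (P (n + 1)) = C ((n : ℂ) + 1) * Q n := by
  rw [hQ n, smul_eq_C_mul, ← mul_assoc, ← C_mul, mul_inv_cancel₀ (Nat.cast_add_one_ne_zero n),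
    C_1, one_mul]

theorem monicPS_of_eq_smul_Dw (hω : ω ≠ 0) (hP : MonicPS P)
    (hQ : ∀ n, Q n = ((n : ℂ) + 1)⁻¹ • Dw ω (P (n + 1))) : MonicPS Q := fun n => by
  have hdeg := (hP (n + 1)).2.le
  have h : IsMonicOfDegree (Q n) n := by
    rw [isMonicOfDegree_iff, hQ n, coeff_smul, coeff_Dw hω hdeg, hP.coeff_self, smul_eq_mul,
      mul_one, inv_mul_cancel₀ (Nat.cast_add_one_ne_zero n)]
    exact ⟨(natDegree_smul_le _ _).trans (natDegree_Dw_le hdeg), rfl⟩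
  exact ⟨h.monic, h.natDegree_eq⟩

theorem pearson_identity (hP : MonicPS P) (horth : IsOrthogonalWrt P u)
    (hv : ∀ m, v (Dw ω (P (m + 2))) = 0) (f : ℂ[X]) :
    u (P 1 * P 1) * v (Dw ω f) = v (Dw ω (P 1)) * u (P 1 * f) := by
  have key : u (P 1 * P 1) • v ∘ₗ Dwₗ ω = v (Dw ω (P 1)) • u ∘ₗ LinearMap.mulLeft ℂ (P 1) := by
    refine hP.basis.ext fun n => ?_
    simp only [LinearMap.smul_apply, LinearMap.comp_apply, Dwₗ_apply, LinearMap.mulLeft_apply,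
      hP.basis_apply, smul_eq_mul]
    match n with
    | 0 =>
      have h10 := horth 1 0 one_ne_zero
      rw [hP.zero_eq_one] at h10 ⊢
      rw [← C_1, Dw_C, C_1, map_zero, mul_zero, h10, mul_zero]
    | 1 => ring
    | m + 2 => rw [hv m, horth 1 (m + 2) (by omega)]; ring
  simpa using LinearMap.congr_fun key f

theorem apply_Dw_mul_eq_zero (hP : MonicPS P) (hops : IsOPSwrt P u)
    (hv : ∀ m, v (Dw ω (P (m + 2))) = 0) {g : ℂ[X]} {n : ℕ} (hg : g.degree < n) :
    v (Dw ω (P (n + 1) * g)) = 0 := by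
  have hdeg : (P 1 * g).degree < ↑(n + 1) := by
    rw [degree_mul, hP.degree_eq, Nat.cast_add, add_comm (n : WithBot ℕ)]
    exact WithBot.add_lt_add_left WithBot.coe_ne_bot hg
  have h := pearson_identity hP hops.isOrthogonalWrt hv (P (n + 1) * g)
  rw [show P 1 * (P (n + 1) * g) = P 1 * g * P (n + 1) by ring,
    hops.isOrthogonalWrt.apply_mul_eq_zero hP hdeg, mul_zero] at h
  exact (mul_eq_zero.mp h).resolve_left (hops.2 1)

theorem apply_Dw_eq_zero (hQ : ∀ n, Q n = ((n : ℂ) + 1)⁻¹ • Dw ω (P (n + 1)))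
    (hv : ∀ m, v (Q (m + 1)) = 0) (m : ℕ) : v (Dw ω (P (m + 2))) = 0 := by
  rw [Dw_succ_eq_C_mul hQ, v.map_C_mul, hv, mul_zero]

theorem apply_P_mul_Q_eq_zero (hω : ω ≠ 0) (hP : MonicPS P) (hops : IsOPSwrt P u)
    (hQ : ∀ n, Q n = ((n : ℂ) + 1)⁻¹ • Dw ω (P (n + 1))) (hQv : IsOrthogonalWrt Q v)
    {j n : ℕ} (hjn : j < n) : v (P (n + 2) * Q j) = 0 := by
  have hQm := monicPS_of_eq_smul_Dw hω hP hQ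
  have h := apply_Dw_mul_eq_zero hP hops (apply_Dw_eq_zero hQ (hQv.apply_succ_eq_zero hQm))
    (g := P (j + 1)) (n := n + 1)
    (by rw [hP.degree_eq]; exact_mod_cast (by omega : j + 1 < n + 1))
  have hcomp : ((P (j + 1)).comp (X + C ω)).degree < ↑(n + 1) := by
    rw [← taylor_apply, degree_taylor, hP.degree_eq]; exact_mod_cast (by omega : j + 1 < n + 1)
  rw [Dw_mul, Dw_succ_eq_C_mul hQ, Dw_succ_eq_C_mul hQ (n + 1), map_add, mul_left_comm,
    v.map_C_mul, mul_left_comm, v.map_C_mul, hQv.apply_mul_eq_zero hQm hcomp, mul_zero,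
    add_zero] at h
  exact (mul_eq_zero.mp h).resolve_left (Nat.cast_add_one_ne_zero j)

theorem exists_second_structure_relation (hω : ω ≠ 0) (hP : MonicPS P) (hops : IsOPSwrt P u)
    (hQ : ∀ n, Q n = ((n : ℂ) + 1)⁻¹ • Dw ω (P (n + 1))) (hQv : IsOPSwrt Q v) :
    ∃ a b : ℕ → ℂ,
      (∀ n, P (n + 2) = Q (n + 2) + C (a (n + 1)) * Q (n + 1) + C (b n) * Q n) ∧
      P 1 = Q 1 + C (a 0) := by
  have hQm := monicPS_of_eq_smul_Dw hω hP hQ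
  have hrel (n : ℕ) : ∃ a b : ℂ, P (n + 2) - Q (n + 2) = C a * Q (n + 1) + C b * Q n :=
    hQv.exists_eq_C_mul_add_C_mul hQm
      ((hP.isMonicOfDegree _).natDegree_sub_lt (by omega) (hQm.isMonicOfDegree _))
      fun k hk => by
        rw [sub_mul, map_sub, apply_P_mul_Q_eq_zero hω hP hops hQ hQv.isOrthogonalWrt hk,
          hQv.isOrthogonalWrt (n + 2) k (by omega), sub_zero]
  choose a b hab using hrel
  have h1 : (P 1 - Q 1).natDegree = 0 := Nat.lt_one_iff.mp
    ((hP.isMonicOfDegree 1).natDegree_sub_lt one_ne_zero (hQm.isMonicOfDegree 1))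
  refine ⟨fun | 0 => (P 1 - Q 1).coeff 0 | n + 1 => a n, b, fun n => ?_, ?_⟩
  · linear_combination hab n
  · linear_combination eq_C_of_natDegree_eq_zero h1

theorem apply_mul_Q_eq_zero_of_second_structure_relation (hP : MonicPS P) (hops : IsOPSwrt P u)
    (hQ : ∀ n, Q n = ((n : ℂ) + 1)⁻¹ • Dw ω (P (n + 1))) (hv : ∀ m, v (Q (m + 1)) = 0)
    (hSR : ∀ n, P (n + 2) = Q (n + 2) + C (a (n + 1)) * Q (n + 1) + C (b n) * Q n)
    (m : ℕ) {g : ℂ[X]} (hg : g.degree < m) {n : ℕ} (hmn : m ≤ n) : v (g * Q n) = 0 := by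
  induction m generalizing g n with
  | zero =>
    rw [Nat.cast_zero, Nat.WithBot.lt_zero_iff, degree_eq_bot] at hg
    rw [hg, zero_mul, map_zero]
  | succ m ih =>
    obtain ⟨t, rfl⟩ : ∃ t, n = t + 1 := ⟨n - 1, by omega⟩
    set g' := taylor (-ω) g
    have hg' : g'.degree < ↑(t + 1) := by
      rw [degree_taylor]; exact hg.trans_le (by exact_mod_cast hmn)
    have hDg' (k : ℕ) (hk : m ≤ k) : v (Dw ω g' * Q k) = 0 :=
      ih (degree_Dw_lt (by rwa [degree_taylor])) hk
    have hlow : v (P (t + 2) * Dw ω g') = 0 := by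
      rw [mul_comm, hSR t, mul_add, mul_add, mul_left_comm _ (C _), mul_left_comm _ (C _),
        map_add, map_add, v.map_C_mul, v.map_C_mul, hDg' _ (by omega), hDg' _ (by omega),
        hDg' _ (by omega)]
      ring
    have h := apply_Dw_mul_eq_zero hP hops (apply_Dw_eq_zero hQ hv) hg'
    rw [Dw_mul, ← taylor_apply, taylor_taylor, add_neg_cancel, taylor_zero,
      Dw_succ_eq_C_mul hQ, map_add, hlow, zero_add, mul_left_comm, v.map_C_mul] at h
    exact (mul_eq_zero.mp h).resolve_left (Nat.cast_add_one_ne_zero _)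

theorem apply_P_mul_Q_eq (hQv : IsOrthogonalWrt Q v)
    (hSR : ∀ n, P (n + 2) = Q (n + 2) + C (a (n + 1)) * Q (n + 1) + C (b n) * Q n) (n : ℕ) :
    v (P (n + 2) * Q n) = b n * v (Q n * Q n) := by
  rw [hSR n, add_mul, add_mul, map_add, map_add, mul_assoc, v.map_C_mul, mul_assoc, v.map_C_mul,
    hQv (n + 2) n (by omega), hQv (n + 1) n (by omega)]
  ring

theorem apply_Q_succ_mul_self_eq_zero (hω : ω ≠ 0) (hP : MonicPS P) (hops : IsOPSwrt P u)
    (hQ : ∀ n, Q n = ((n : ℂ) + 1)⁻¹ • Dw ω (P (n + 1))) (hQv : IsOrthogonalWrt Q v)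
    (hSR : ∀ n, P (n + 2) = Q (n + 2) + C (a (n + 1)) * Q (n + 1) + C (b n) * Q n) {n : ℕ}
    (hn : v (Q n * Q n) = 0) : v (Q (n + 1) * Q (n + 1)) = 0 := by
  have hQm := monicPS_of_eq_smul_Dw hω hP hQ
  obtain ⟨β, γ, hrec⟩ := hops.exists_recurrence hP (n + 1)
  have hpoly : Q n * Dw ω (P (n + 3)) = C ((n : ℂ) + 2) * (Q n * (X - C β) * Q (n + 1))
      + P (n + 2) * Q n + C (ω * ((n : ℂ) + 2)) * (Q n * Q (n + 1))
      - C (γ * ((n : ℂ) + 1)) * (Q n * Q n) := by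
    rw [hrec, Dw_sub, Dw_mul, Dw_C_mul, Dw_X_sub_C hω, comp_X_add_C_eq_add_C_mul_Dw hω,
      Dw_succ_eq_C_mul hQ (n + 1), Dw_succ_eq_C_mul hQ n]
    simp only [map_add, map_mul, map_natCast, map_one, Nat.cast_add, Nat.cast_one, map_ofNat]
    ring
  have h := congrArg v hpoly
  rw [Dw_succ_eq_C_mul hQ (n + 2), mul_left_comm, v.map_C_mul, hQv n (n + 2) (by omega),
    map_sub, map_add, map_add, v.map_C_mul, v.map_C_mul, v.map_C_mul, hQv n (n + 1) (by omega),
    hn, apply_P_mul_Q_eq hQv hSR, hn, hQv.apply_mul_eq_of_isMonicOfDegree hQm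
      ((hQm.isMonicOfDegree n).mul (isMonicOfDegree_X_sub_one β))] at h
  have h2 : ((n + 1 : ℕ) + 1 : ℂ) * v (Q (n + 1) * Q (n + 1)) = 0 := by
    push_cast; linear_combination -h
  exact (mul_eq_zero.mp h2).resolve_left (Nat.cast_add_one_ne_zero _)

theorem apply_Q_mul_self_ne_zero (hω : ω ≠ 0) (hP : MonicPS P) (hops : IsOPSwrt P u)
    (hQ : ∀ n, Q n = ((n : ℂ) + 1)⁻¹ • Dw ω (P (n + 1))) (hQv : IsOrthogonalWrt Q v)
    (hv0 : v (Q 0) ≠ 0)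
    (hSR : ∀ n, P (n + 2) = Q (n + 2) + C (a (n + 1)) * Q (n + 1) + C (b n) * Q n) (n : ℕ) :
    v (Q n * Q n) ≠ 0 := by
  intro hn
  have hQm := monicPS_of_eq_smul_Dw hω hP hQ
  have hn1 := apply_Q_succ_mul_self_eq_zero hω hP hops hQ hQv hSR hn
  have hcomp : ((P (n + 1)).comp (X + C ω)).natDegree ≤ n + 1 := by
    rw [← taylor_apply, natDegree_taylor, (hP _).2]
  have hD : v (Dw ω (P (n + 2) * P (n + 1))) = 0 := by
    rw [Dw_mul, Dw_succ_eq_C_mul hQ n, Dw_succ_eq_C_mul hQ (n + 1), map_add, mul_left_comm,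
      v.map_C_mul, mul_left_comm, v.map_C_mul, apply_P_mul_Q_eq hQv hSR, hn,
      hQv.apply_mul_eq_coeff_mul hQm hcomp, hn1]
    ring
  have hu : u (P 1 * (P (n + 2) * P (n + 1))) = u (P (n + 2) * P (n + 2)) := by
    rw [show P 1 * (P (n + 2) * P (n + 1)) = P (n + 1) * P 1 * P (n + 2) by ring]
    exact hops.isOrthogonalWrt.apply_mul_eq_of_isMonicOfDegree hP
      ((hP.isMonicOfDegree (n + 1)).mul (hP.isMonicOfDegree 1))
  have hD1 : Dw ω (P 1) = Q 0 := by simpa using Dw_succ_eq_C_mul hQ 0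
  have h := pearson_identity hP hops.isOrthogonalWrt
    (apply_Dw_eq_zero hQ (hQv.apply_succ_eq_zero hQm)) (P (n + 2) * P (n + 1))
  rw [hD, hu, hD1, mul_zero] at h
  exact mul_ne_zero hv0 (hops.2 _) h.symm

theorem exists_isOPSwrt_of_second_structure_relation (hω : ω ≠ 0) (hP : MonicPS P)
    (hops : IsOPSwrt P u) (hQ : ∀ n, Q n = ((n : ℂ) + 1)⁻¹ • Dw ω (P (n + 1)))
    (hSR : ∀ n, P (n + 2) = Q (n + 2) + C (a (n + 1)) * Q (n + 1) + C (b n) * Q n) :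
    ∃ v, IsOPSwrt Q v := by
  have hQm := monicPS_of_eq_smul_Dw hω hP hQ
  set v := hQm.basis.coord 0
  have hv (m : ℕ) : v (Q (m + 1)) = 0 := by simp [v, ← hQm.basis_apply]
  have hv0 : v (Q 0) ≠ 0 := by simp [v, ← hQm.basis_apply]
  have hvan {m n : ℕ} (hmn : m < n) : v (Q m * Q n) = 0 :=
    apply_mul_Q_eq_zero_of_second_structure_relation hP hops hQ hv hSR n
      (by rw [hQm.degree_eq]; exact_mod_cast hmn) le_rfl
  have horth : IsOrthogonalWrt Q v := fun m n hmn =>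
    hmn.lt_or_gt.elim hvan fun h => by rw [mul_comm]; exact hvan h
  exact ⟨v, horth, apply_Q_mul_self_ne_zero hω hP hops hQ horth hv0 hSR⟩

end DerivedSequence

theorem second_structure_relation_characterization
    (ω : ℂ) (hω : ω ≠ 0) (P Q : ℕ → Polynomial ℂ) (hP : MonicPS P)
    (u0 : Polynomial ℂ →ₗ[ℂ] ℂ) (hops : IsOPSwrt P u0)
    (hQ : ∀ n, Q n = ((n : ℂ) + 1)⁻¹ • Dw ω (P (n + 1))) :
    (∃ v, IsOPSwrt Q v) ↔
      ∃ a b : ℕ → ℂ,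
        (∀ n, P (n + 2) = Q (n + 2) + C (a (n + 1)) * Q (n + 1) + C (b n) * Q n) ∧
        P 1 = Q 1 + C (a 0) := by
  constructor
  · rintro ⟨v, hv⟩
    exact exists_second_structure_relation hω hP hops hQ hv
  · rintro ⟨a, b, hSR, -⟩
    exact exists_isOPSwrt_of_second_structure_relation hω hP hops hQ hSR
end

section
/- Let (θ_n)_{n≥1} be a sequence of nonzero complex numbers satisfying the Riccati-type equation (θ_{n+1} − 2)θ_n + 1 = 0 for all n ≥ 1. Then either θ_n = 1 for all n ≥ 1, or there exists c ∈ ℂ such that for all n ≥ 1 one has n + c ≠ 0 and θ_n = (n + c + 1)/(n + c). -/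
open Polynomial

/-!
The recurrence reads `(θₙ₊₁ - 1) θₙ = θₙ - 1`, so `1` is a fixed point, and away from it the
Möbius substitution `yₙ = 1 / (θₙ - 1)` linearizes the recurrence to `yₙ₊₁ = yₙ + 1`.
Hence `yₙ = n + c`, i.e. `θₙ = 1 + 1 / (n + c)`.
-/

section Field

variable {K : Type*} [Field K]

theorem sub_one_mul_of_riccati {a b : K} (h : (a - 2) * b + 1 = 0) :
    (a - 1) * b = b - 1 := by
  linear_combination h

theorem sub_one_ne_zero_of_riccati {a b : K} (h : (a - 2) * b + 1 = 0) (hb : b ≠ 1) :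
    a - 1 ≠ 0 := by
  intro ha
  have := sub_one_mul_of_riccati h
  rw [ha, zero_mul, eq_comm, sub_eq_zero] at this
  exact hb this

theorem inv_sub_one_of_riccati {a b : K} (h : (a - 2) * b + 1 = 0) (hb : b ≠ 1) :
    (a - 1)⁻¹ = (b - 1)⁻¹ + 1 := by
  have hb' : b - 1 ≠ 0 := sub_ne_zero.mpr hb
  have ha : a - 1 ≠ 0 := sub_one_ne_zero_of_riccati h hb
  field_simp
  linear_combination -h

theorem eq_add_of_succ_eq_add_one {y : ℕ → K} (hy : ∀ n, 1 ≤ n → y (n + 1) = y n + 1) :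
    ∀ n, 1 ≤ n → y n = n + (y 1 - 1) := by
  intro n hn
  induction n, hn using Nat.le_induction with
  | base => push_cast; ring
  | succ n hn ih => rw [hy n hn, ih]; push_cast; ring

variable {θ : ℕ → K}

theorem riccati_eq_one_of_eq_one (hric : ∀ n, 1 ≤ n → (θ (n + 1) - 2) * θ n + 1 = 0)
    (h1 : θ 1 = 1) : ∀ n, 1 ≤ n → θ n = 1 := by
  intro n hn
  induction n, hn using Nat.le_induction with
  | base => exact h1
  | succ n hn ih => linear_combination (ih ▸ hric n hn : (θ (n + 1) - 2) * 1 + 1 = 0)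

theorem riccati_ne_one_of_ne_one (hric : ∀ n, 1 ≤ n → (θ (n + 1) - 2) * θ n + 1 = 0)
    (h1 : θ 1 ≠ 1) : ∀ n, 1 ≤ n → θ n ≠ 1 := by
  intro n hn
  induction n, hn using Nat.le_induction with
  | base => exact h1
  | succ n hn ih => exact sub_ne_zero.mp (sub_one_ne_zero_of_riccati (hric n hn) ih)

theorem riccati_inv_sub_one_eq (hric : ∀ n, 1 ≤ n → (θ (n + 1) - 2) * θ n + 1 = 0)
    (h1 : θ 1 ≠ 1) : ∀ n, 1 ≤ n → (θ n - 1)⁻¹ = n + ((θ 1 - 1)⁻¹ - 1) :=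
  eq_add_of_succ_eq_add_one fun n hn ↦
    inv_sub_one_of_riccati (hric n hn) (riccati_ne_one_of_ne_one hric h1 n hn)

end Field

theorem riccati_solutions_general
    (θ : ℕ → ℂ)
    (hric : ∀ n : ℕ, 1 ≤ n → (θ (n + 1) - 2) * θ n + 1 = 0) :
    (∀ n : ℕ, 1 ≤ n → θ n = 1) ∨
      ∃ c : ℂ, ∀ n : ℕ, 1 ≤ n →
        (n : ℂ) + c ≠ 0 ∧ θ n = ((n : ℂ) + c + 1) / ((n : ℂ) + c) := by
  by_cases h1 : θ 1 = 1
  · exact Or.inl (riccati_eq_one_of_eq_one hric h1)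
  refine Or.inr ⟨(θ 1 - 1)⁻¹ - 1, fun n hn ↦ ?_⟩
  have hθ : θ n - 1 ≠ 0 := sub_ne_zero.mpr (riccati_ne_one_of_ne_one hric h1 n hn)
  rw [← riccati_inv_sub_one_eq hric h1 n hn]
  refine ⟨inv_ne_zero hθ, ?_⟩
  field_simp
  ring

theorem riccati_solutions
    (θ : ℕ → ℂ) (hne : ∀ n : ℕ, 1 ≤ n → θ n ≠ 0)
    (hric : ∀ n : ℕ, 1 ≤ n → (θ (n + 1) - 2) * θ n + 1 = 0) :
    (∀ n : ℕ, 1 ≤ n → θ n = 1) ∨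
      ∃ c : ℂ, ∀ n : ℕ, 1 ≤ n →
        (n : ℂ) + c ≠ 0 ∧ θ n = ((n : ℂ) + c + 1) / ((n : ℂ) + c) :=
  riccati_solutions_general θ hric
end

section
/- Let ω, θ ∈ ℂ with 2n + θ + 1 ≠ 0 and 2n + θ − 1 ≠ 0 for all n ≥ 0, and let (β_n)_{n≥0}, (δ_n)_{n≥0} be complex sequences satisfying (2n + θ + 3)δ_n − (2n + θ − 1)δ_{n−1} = −2ω for all n ≥ 1, and β_{n+1} − β_n = nδ_{n−1} − (n+2)δ_n − ω for all n ≥ 0 (with δ_{−1} := 0). Then β_n = β_0 − (2δ_0 + ω)(θ+3) n(n+θ) / ((2n+θ+1)(2n+θ−1)) for all n ≥ 0. -/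
open Polynomial

theorem beta_explicit_formula_caseB
    (ω θ : ℂ)
    (h1 : ∀ n : ℕ, 2 * (n : ℂ) + θ + 1 ≠ 0)
    (h2 : ∀ n : ℕ, 2 * (n : ℂ) + θ - 1 ≠ 0)
    (β δ : ℕ → ℂ)
    (hδ : ∀ n : ℕ, 1 ≤ n →
        (2 * (n : ℂ) + θ + 3) * δ n - (2 * (n : ℂ) + θ - 1) * δ (n - 1) = -2 * ω)
    (hβ0 : β 1 - β 0 = -2 * δ 0 - ω)
    (hβ : ∀ n : ℕ, 1 ≤ n →
        β (n + 1) - β n = (n : ℂ) * δ (n - 1) - ((n : ℂ) + 2) * δ n - ω) :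
    ∀ n : ℕ, β n = β 0 -
      (2 * δ 0 + ω) * (θ + 3) * (n : ℂ) * ((n : ℂ) + θ)
        / ((2 * (n : ℂ) + θ + 1) * (2 * (n : ℂ) + θ - 1)) := by
  -- nonvanishing facts
  have hA : ∀ n : ℕ, 2 * (n : ℂ) + θ + 1 ≠ 0 := h1
  have hB : ∀ n : ℕ, 2 * (n : ℂ) + θ + 3 ≠ 0 := by
    intro n h
    exact h1 (n + 1) (by push_cast; linear_combination h)
  have hC : ∀ n : ℕ, 2 * (n : ℂ) + θ + 5 ≠ 0 := by
    intro n h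
    exact h1 (n + 2) (by push_cast; linear_combination h)
  have ht1 : θ + 1 ≠ 0 := by
    intro h; exact h1 0 (by push_cast; linear_combination h)
  have ht3 : θ + 3 ≠ 0 := by
    intro h; exact h2 2 (by push_cast; linear_combination h)
  -- closed form for δ (multiplied form)
  have hδm : ∀ n : ℕ, (2 * (n : ℂ) + θ + 3) * (2 * (n : ℂ) + θ + 1) * δ n
      = (θ + 3) * (θ + 1) * δ 0 - 2 * ω * (n : ℂ) * ((n : ℂ) + θ + 2) := by
    intro n
    induction n with
    | zero => push_cast; ring
    | succ m ih =>
      have hrec := hδ (m + 1) (by omega)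
      simp only [Nat.add_sub_cancel] at hrec
      push_cast at hrec ⊢
      linear_combination (2 * (m : ℂ) + θ + 3) * hrec + ih
  have hδc : ∀ n : ℕ, δ n = ((θ + 3) * (θ + 1) * δ 0 - 2 * ω * (n : ℂ) * ((n : ℂ) + θ + 2))
      / ((2 * (n : ℂ) + θ + 3) * (2 * (n : ℂ) + θ + 1)) := by
    intro n
    rw [eq_div_iff (mul_ne_zero (hB n) (hA n))]
    linear_combination hδm n
  intro n
  induction n with
  | zero => push_cast; simp
  | succ m ih =>
    match m, ih with
    | 0, _ =>
      have key : (2 * δ 0 + ω) * (θ + 3) * ((1 : ℕ) : ℂ) * (((1 : ℕ) : ℂ) + θ)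
          / ((2 * ((1 : ℕ) : ℂ) + θ + 1) * (2 * ((1 : ℕ) : ℂ) + θ - 1)) = 2 * δ 0 + ω := by
        rw [div_eq_iff (mul_ne_zero (by intro h; exact ht3 (by push_cast at h; linear_combination h))
          (by intro h; exact ht1 (by push_cast at h; linear_combination h)))]
        push_cast; ring
      rw [key]
      linear_combination hβ0
    | (k + 1), ih =>
      have hrec := hβ (k + 1) (by omega)
      simp only [Nat.add_sub_cancel] at hrec
      have hd : β (k + 1 + 1) = β (k + 1) + (((k : ℂ) + 1) * δ k - (((k : ℂ) + 1) + 2) * δ (k + 1) - ω) := by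
        push_cast at hrec
        linear_combination hrec
      rw [hd, ih, hδc k, hδc (k + 1)]
      have e1 : (2 * (((k : ℕ) + 1 + 1 : ℕ) : ℂ) + θ + 1) = 2 * (k : ℂ) + θ + 5 := by push_cast; ring
      have e2 : (2 * (((k : ℕ) + 1 + 1 : ℕ) : ℂ) + θ - 1) = 2 * (k : ℂ) + θ + 3 := by push_cast; ring
      have e3 : (2 * (((k : ℕ) + 1 : ℕ) : ℂ) + θ + 3) = 2 * (k : ℂ) + θ + 5 := by push_cast; ring
      have e4 : (2 * (((k : ℕ) + 1 : ℕ) : ℂ) + θ + 1) = 2 * (k : ℂ) + θ + 3 := by push_cast; ring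
      have e5 : (2 * (((k : ℕ) + 1 : ℕ) : ℂ) + θ + 1) * (2 * (((k : ℕ) + 1 : ℕ) : ℂ) + θ - 1)
          = (2 * (k : ℂ) + θ + 3) * (2 * (k : ℂ) + θ + 1) := by push_cast; ring
      push_cast [e1, e2, e3, e4, e5] at *
      have hh2 : (2 : ℂ) * (k : ℂ) + θ + 2 - 1 = 2 * (k : ℂ) + θ + 1 := by ring
      have hh4 : (2 : ℂ) * ((k : ℂ) + 1) + θ + 1 = 2 * (k : ℂ) + θ + 3 := by ring
      have hh5 : (2 : ℂ) * ((k : ℂ) + 1) + θ - 1 = 2 * (k : ℂ) + θ + 1 := by ring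
      have hh6 : (2 : ℂ) * ((k : ℂ) + 1 + 1) + θ + 1 = 2 * (k : ℂ) + θ + 5 := by ring
      have hh7 : (2 : ℂ) * ((k : ℂ) + 1 + 1) + θ - 1 = 2 * (k : ℂ) + θ + 3 := by ring
      have hh8 : (2 : ℂ) * ((k : ℂ) + 1) + θ + 3 = 2 * (k : ℂ) + θ + 5 := by ring
      rw [hh4, hh5, hh6, hh7, hh8]
      field_simp [hA k, hB k, hC k]
      ring
end

section
/- Let ω, θ ∈ ℂ with n + θ ≠ 0, 2n + θ ≠ 0, 2n + θ + 1 ≠ 0 and 2n + θ + 2 ≠ 0 for all n ≥ 0. Let (γ_{n+1})_{n≥0} be a complex sequence and let δ_n := [δ_0(θ+3)(θ+1) − 2ωn(n+θ+2)] / [(2n+θ+3)(2n+θ+1)] for n ≥ 0 (δ_0 ∈ ℂ given), and suppose ((2n+θ+4)/(n+θ+1))·γ_{n+2}/(n+2) − ((2n+θ)/(n+θ))·γ_{n+1}/(n+1) = δ_n(δ_n + ω) for all n ≥ 0. Set μ := (1/4)(2δ_0 + ω)(θ+3)(θ+1) and ϑ_0 := 1/(θ+1). Then for all n ≥ 0: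 γ_{n+1} = −(n+1)(n+θ)·{ [ (1/4)ω² n(n+θ+1) − (μ²ϑ_0² + (θ+2)γ_1) ]·(2n+θ+1)² + μ² } / ( (2n+θ+2)(2n+θ+1)²(2n+θ) ). -/
open Polynomial

set_option maxHeartbeats 2000000 in
set_option maxRecDepth 20000 in
theorem gamma_explicit_formula_caseB
    (ω θ : ℂ)
    (hA : ∀ n : ℕ, (n : ℂ) + θ ≠ 0)
    (hB : ∀ n : ℕ, 2 * (n : ℂ) + θ ≠ 0)
    (hC : ∀ n : ℕ, 2 * (n : ℂ) + θ + 1 ≠ 0)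
    (hD : ∀ n : ℕ, 2 * (n : ℂ) + θ + 2 ≠ 0)
    (γ δ : ℕ → ℂ) (δ₀ : ℂ)
    (hδ : ∀ n : ℕ, δ n =
        (δ₀ * (θ + 3) * (θ + 1) - 2 * ω * (n : ℂ) * ((n : ℂ) + θ + 2))
          / ((2 * (n : ℂ) + θ + 3) * (2 * (n : ℂ) + θ + 1)))
    (hγ : ∀ n : ℕ,
        ((2 * (n : ℂ) + θ + 4) / ((n : ℂ) + θ + 1)) * γ (n + 2) / ((n : ℂ) + 2)
          - ((2 * (n : ℂ) + θ) / ((n : ℂ) + θ)) * γ (n + 1) / ((n : ℂ) + 1)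
          = δ n * (δ n + ω))
    (μ vth0 : ℂ)
    (hμ : μ = (1 / 4) * (2 * δ₀ + ω) * (θ + 3) * (θ + 1))
    (hvth0 : vth0 = 1 / (θ + 1)) :
    ∀ n : ℕ, γ (n + 1) =
      -(((n : ℂ) + 1) * ((n : ℂ) + θ) *
          (((1 / 4) * ω ^ 2 * (n : ℂ) * ((n : ℂ) + θ + 1)
              - (μ ^ 2 * vth0 ^ 2 + (θ + 2) * γ 1)) * (2 * (n : ℂ) + θ + 1) ^ 2
            + μ ^ 2))
        / ((2 * (n : ℂ) + θ + 2) * (2 * (n : ℂ) + θ + 1) ^ 2 * (2 * (n : ℂ) + θ)) := by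
  subst hvth0
  have hθ : θ ≠ 0 := by have := hB 0; simpa using this
  have hθ1 : θ + 1 ≠ 0 := by have := hC 0; simpa using this
  have hθ2 : θ + 2 ≠ 0 := by have := hD 0; simpa using this
  have hn1 : ∀ n : ℕ, ((n : ℂ) + 1) ≠ 0 := fun n =>
    Nat.cast_add_one_ne_zero (R := ℂ) n
  have hn2 : ∀ n : ℕ, ((n : ℂ) + 2) ≠ 0 := fun n => by
    have := Nat.cast_add_one_ne_zero (R := ℂ) (n + 1); push_cast at this
    intro h; exact this (by linear_combination h)
  have hnθ1 : ∀ n : ℕ, (n : ℂ) + θ + 1 ≠ 0 := fun n => by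
    have := hA (n + 1); push_cast at this
    intro h; exact this (by linear_combination h)
  have h2θ3 : ∀ n : ℕ, 2 * (n : ℂ) + θ + 3 ≠ 0 := fun n => by
    have := hC (n + 1); push_cast at this
    intro h; exact this (by linear_combination h)
  have h2θ4 : ∀ n : ℕ, 2 * (n : ℂ) + θ + 4 ≠ 0 := fun n => by
    have := hD (n + 1); push_cast at this
    intro h; exact this (by linear_combination h)
  have main : ∀ n : ℕ, γ (n + 1) *
      ((2 * (n : ℂ) + θ + 2) * (2 * (n : ℂ) + θ + 1) ^ 2 * (2 * (n : ℂ) + θ)) =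
      -(((n : ℂ) + 1) * ((n : ℂ) + θ) *
          (((1 / 4) * ω ^ 2 * (n : ℂ) * ((n : ℂ) + θ + 1)
              - (μ ^ 2 * (1 / (θ + 1)) ^ 2 + (θ + 2) * γ 1)) * (2 * (n : ℂ) + θ + 1) ^ 2
            + μ ^ 2)) := by
    intro n
    induction n with
    | zero =>
        push_cast
        field_simp
        ring
    | succ n ih =>
        have h := hγ n
        have hδω : δ n * (δ n + ω)
            = 4 * μ ^ 2 / ((2 * (n : ℂ) + θ + 3) * (2 * (n : ℂ) + θ + 1)) ^ 2
              - ω ^ 2 / 4 := by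
          rw [hδ n, hμ]
          have e1 := hC n
          have e2 := h2θ3 n
          field_simp
          ring
        rw [hδω] at h
        have e1 := hn1 n
        have e2 := hn2 n
        have e3 := hA n
        have e4 := hnθ1 n
        have e5 := hC n
        have e6 := h2θ3 n
        field_simp at h
        push_cast
        apply mul_left_cancel₀ (show (2 * (n : ℂ) + θ + 4) * ((n : ℂ) + θ) *
            ((n : ℂ) + 1) * ((2 * (n : ℂ) + θ + 3) * (2 * (n : ℂ) + θ + 1)) ^ 2 ≠ 0 from
          mul_ne_zero (mul_ne_zero (mul_ne_zero (h2θ4 n) e3) e1)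
            (pow_ne_zero 2 (mul_ne_zero e6 e5)))
        linear_combination
          ((2 * (n : ℂ) + θ + 4) * (2 * (n : ℂ) + θ + 3) ^ 2 * (2 * (n : ℂ) + θ + 2) / 4) * h
          + (((n : ℂ) + θ + 1) * ((n : ℂ) + 2) * (2 * (n : ℂ) + θ + 3) ^ 4
              * (2 * (n : ℂ) + θ + 4)) * ih
  intro n
  rw [eq_div_iff (mul_ne_zero (mul_ne_zero (hD n) (pow_ne_zero 2 (hC n))) (hB n))]
  linear_combination main n
end

section
/- Let ω ∈ ℂ and let (β_n)_{n≥0}, (γ_{n+1})_{n≥0}, (δ_n)_{n≥0} be complex sequences with δ_0 = −ω/2, satisfying (2n + 4)δ_n − 2n δ_{n−1} = −2ω for all n ≥ 1, β_{n+1} − β_n = nδ_{n−1} − (n+2)δ_n − ω for all n ≥ 0 (with δ_{−1} := 0), and ((2n+5)/(n+2))·γ_{n+2}/(n+2) − ((2n+1)/(n+1))·γ_{n+1}/(n+1) = δ_n(δ_n + ω) for all n ≥ 0. Then δ_n = −ω/2 for all n ≥ 0, β_n = β_0 for all n ≥ 0, and γ_{n+1} = −(1/4)(n+1)²(ω² n(n+2)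 − 12γ_1)/((2n+3)(2n+1)) for all n ≥ 0. -/
open Polynomial

theorem caseB_theta_one_legendre_type
    (ω : ℂ) (β γ δ : ℕ → ℂ)
    (hδ0 : δ 0 = -ω / 2)
    (hδ : ∀ n : ℕ, 1 ≤ n →
        (2 * (n : ℂ) + 4) * δ n - 2 * (n : ℂ) * δ (n - 1) = -2 * ω)
    (hβ0 : β 1 - β 0 = -2 * δ 0 - ω)
    (hβ : ∀ n : ℕ, 1 ≤ n →
        β (n + 1) - β n = (n : ℂ) * δ (n - 1) - ((n : ℂ) + 2) * δ n - ω)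
    (hγ : ∀ n : ℕ,
        ((2 * (n : ℂ) + 5) / ((n : ℂ) + 2)) * γ (n + 2) / ((n : ℂ) + 2)
          - ((2 * (n : ℂ) + 1) / ((n : ℂ) + 1)) * γ (n + 1) / ((n : ℂ) + 1)
          = δ n * (δ n + ω)) :
    (∀ n : ℕ, δ n = -ω / 2) ∧ (∀ n : ℕ, β n = β 0) ∧
      ∀ n : ℕ, γ (n + 1) =
        -(1 / 4) * ((n : ℂ) + 1) ^ 2 * (ω ^ 2 * (n : ℂ) * ((n : ℂ) + 2) - 12 * γ 1)
          / ((2 * (n : ℂ) + 3) * (2 * (n : ℂ) + 1)) := by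
  have hδall : ∀ n : ℕ, δ n = -ω / 2 := by
    intro n
    induction n with
    | zero => exact hδ0
    | succ k ih =>
      have h := hδ (k + 1) (by omega)
      simp only [Nat.add_sub_cancel] at h
      push_cast at h
      rw [ih] at h
      have hne : 2 * (k : ℂ) + 6 ≠ 0 := by
        have : ((2 * k + 6 : ℕ) : ℂ) ≠ 0 := Nat.cast_ne_zero.mpr (by omega)
        push_cast at this
        exact this
      have key : (2 * (k : ℂ) + 6) * δ (k + 1) = (2 * (k : ℂ) + 6) * (-ω / 2) := by
        push_cast
        linear_combination h
      exact mul_left_cancel₀ hne key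
  have hβall : ∀ n : ℕ, β n = β 0 := by
    intro n
    induction n with
    | zero => rfl
    | succ k ih =>
      rcases Nat.eq_zero_or_pos k with hk | hk
      · subst hk
        rw [hδ0] at hβ0
        have : β 1 = β 0 := by linear_combination hβ0
        simpa using this
      · have h := hβ k (by omega)
        rw [hδall k, hδall (k - 1)] at h
        have : β (k + 1) = β k := by linear_combination h
        rw [this, ih]
  refine ⟨hδall, hβall, ?_⟩
  intro n
  induction n with
  | zero =>
    push_cast
    field_simp
    ring
  | succ k ih =>
    have h1 : (k : ℂ) + 1 ≠ 0 := by
      have : ((k + 1 : ℕ) : ℂ) ≠ 0 := Nat.cast_ne_zero.mpr (by omega)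
      push_cast at this; exact this
    have h2 : (k : ℂ) + 2 ≠ 0 := by
      have : ((k + 2 : ℕ) : ℂ) ≠ 0 := Nat.cast_ne_zero.mpr (by omega)
      push_cast at this; exact this
    have h3 : 2 * (k : ℂ) + 5 ≠ 0 := by
      have : ((2 * k + 5 : ℕ) : ℂ) ≠ 0 := Nat.cast_ne_zero.mpr (by omega)
      push_cast at this; exact this
    have h4 : 2 * (k : ℂ) + 3 ≠ 0 := by
      have : ((2 * k + 3 : ℕ) : ℂ) ≠ 0 := Nat.cast_ne_zero.mpr (by omega)
      push_cast at this; exact this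
    have h5 : 2 * (k : ℂ) + 1 ≠ 0 := by
      have : ((2 * k + 1 : ℕ) : ℂ) ≠ 0 := Nat.cast_ne_zero.mpr (by omega)
      push_cast at this; exact this
    have h := hγ k
    rw [hδall k] at h
    have h' : (2 * (k : ℂ) + 5) * ((k : ℂ) + 1) ^ 2 * γ (k + 2)
        - (2 * (k : ℂ) + 1) * ((k : ℂ) + 2) ^ 2 * γ (k + 1)
        = -(ω ^ 2 / 4) * ((k : ℂ) + 1) ^ 2 * ((k : ℂ) + 2) ^ 2 := by
      field_simp at h
      linear_combination h / 4
    have ih' : γ (k + 1) * ((2 * (k : ℂ) + 3) * (2 * (k : ℂ) + 1))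
        = -(1 / 4) * ((k : ℂ) + 1) ^ 2 * (ω ^ 2 * (k : ℂ) * ((k : ℂ) + 2) - 12 * γ 1) := by
      rw [eq_div_iff (mul_ne_zero h4 h5)] at ih
      exact ih
    push_cast
    rw [eq_div_iff (mul_ne_zero (by push_cast; ring_nf; ring_nf at h3; exact h3) (by
        have : 2 * ((k : ℂ) + 1) + 1 = 2 * (k : ℂ) + 3 := by ring
        rw [this]; exact h4))]
    have key : ((k : ℂ) + 1) ^ 2 * (γ (k + 1 + 1) * (2 * ((k : ℂ) + 1) + 3) * (2 * ((k : ℂ) + 1) + 1))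
        = ((k : ℂ) + 1) ^ 2 * (-(1 / 4) * ((k : ℂ) + 1 + 1) ^ 2
            * (ω ^ 2 * ((k : ℂ) + 1) * ((k : ℂ) + 1 + 2) - 12 * γ 1)) := by
      have hh : γ (k + 1 + 1) = γ (k + 2) := by norm_num
      rw [hh]
      linear_combination (2 * (k : ℂ) + 3) * h' + ((k : ℂ) + 2) ^ 2 * ih'
    have := mul_left_cancel₀ (pow_ne_zero 2 h1) key
    linear_combination this
end

section
/- Let {P_n}_{n≥0} be a monic PS satisfying the three-term recurrence with coefficients (β_n), (γ_{n+1}), let Q_n := (n+1)^{-1} D_ω P_{n+1}, and suppose {Q_n}_{n≥0} satisfies the three-term recurrence with coefficients (β̃_n), (γ̃_{n+1}). Let Φ(x) = a₂x² + a₁x + a₀ with a₂, a₁, a₀ ∈ ℂ, and suppose the first structure relation Φ(x)Q_n(x) = α²_{n+2}P_{n+2}(x) + α¹_{n+1}P_{n+1}(x) + α⁰_n P_n(x) holds for all n ≥ 0, and the second structure relation P_{n+2} = Q_{n+2} + ã¹_{n+1}Q_{n+1} + ã⁰_n Q_n (n ≥ 0), P_1 = Q_1 + ã¹_0 holds. Then,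 with the convention γ̃_0 := 0: α²_{n+2} = a₂ for all n ≥ 0; α¹_{n+1} + a₂ã¹_{n+1} = a₂(β̃_{n+1} + β̃_n) + a₁ for all n ≥ 0; α¹_{n+1}ã¹_n + a₂ã⁰_n + α⁰_n = a₂(γ̃_{n+1} + γ̃_n + β̃_n²) + a₁β̃_n + a₀ for all n ≥ 0; α¹_{n+1}ã⁰_{n−1} + α⁰_n ã¹_{n−1} = a₂γ̃_n(β̃_n + β̃_{n−1}) + a₁γ̃_n for all n ≥ 1; and α⁰_{n+1}ã⁰_{n−1} = a₂γ̃_{n+1}γ̃_n for all n ≥ 1. -/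
open Polynomial

lemma monicPS_of_ttr (Q : ℕ → Polynomial ℂ) (β γ : ℕ → ℂ) (h : TTR Q β γ) : MonicPS Q := by
  intro n
  induction n using Nat.twoStepInduction with
  | zero => rw [h.1]; exact ⟨monic_one, natDegree_one⟩
  | one => rw [h.2.1]; exact ⟨monic_X_sub_C _, natDegree_X_sub_C _⟩
  | more n ih ih' =>
    rw [h.2.2 n]
    have hm : ((X - C (β (n+1))) * Q (n+1)).Monic := (monic_X_sub_C _).mul ih'.1
    have hd : ((X - C (β (n+1))) * Q (n+1)).natDegree = n + 2 := by
      rw [(monic_X_sub_C _).natDegree_mul ih'.1, natDegree_X_sub_C, ih'.2]; ring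
    have hlt : (C (γ (n+1)) * Q n).natDegree < ((X - C (β (n+1))) * Q (n+1)).natDegree := by
      refine lt_of_le_of_lt (natDegree_C_mul_le _ _) ?_
      rw [hd, ih.2]; omega
    constructor
    · have : (C (γ (n+1)) * Q n).degree < ((X - C (β (n+1))) * Q (n+1)).degree := by
        refine lt_of_le_of_lt degree_le_natDegree ?_
        rw [degree_eq_natDegree hm.ne_zero]
        exact_mod_cast hlt
      simpa [sub_eq_add_neg, degree_neg] using hm.add_of_left (by simpa [degree_neg] using this)
    · rw [natDegree_sub_eq_left_of_natDegree_lt hlt, hd]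

lemma coeffQ0 (Q : ℕ → Polynomial ℂ) (hQ : MonicPS Q) (e : ℂ) {j k : ℕ} (hjk : j < k) :
    (C e * Q j).coeff k = 0 := by
  rw [coeff_C_mul, coeff_eq_zero_of_natDegree_lt (by rw [(hQ j).2]; exact hjk), mul_zero]

lemma coeffQ1 (Q : ℕ → Polynomial ℂ) (hQ : MonicPS Q) (e : ℂ) (j : ℕ) :
    (C e * Q j).coeff j = e := by
  rw [coeff_C_mul]
  have := (hQ j).1.coeff_natDegree
  rw [(hQ j).2] at this
  rw [this, mul_one]

lemma myIndep3 (Q : ℕ → Polynomial ℂ) (hQ : MonicPS Q) (n : ℕ) (e2 e1 e0 : ℂ)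
    (h : C e2 * Q (n+2) + C e1 * Q (n+1) + C e0 * Q n = 0) :
    e2 = 0 ∧ e1 = 0 ∧ e0 = 0 := by
  have h2 : e2 = 0 := by
    have := congrArg (fun p => Polynomial.coeff p (n+2)) h
    simpa [coeff_add, coeffQ1 Q hQ, coeffQ0 Q hQ _ (by omega : n+1 < n+2),
      coeffQ0 Q hQ _ (by omega : n < n+2)] using this
  rw [h2] at h; simp only [map_zero, zero_mul, zero_add] at h
  have h1 : e1 = 0 := by
    have := congrArg (fun p => Polynomial.coeff p (n+1)) h
    simpa [coeff_add, coeffQ1 Q hQ, coeffQ0 Q hQ _ (by omega : n < n+1)] using this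
  rw [h1] at h; simp only [map_zero, zero_mul, zero_add] at h
  have h0 : e0 = 0 := by
    have := congrArg (fun p => Polynomial.coeff p n) h
    simpa [coeffQ1 Q hQ] using this
  exact ⟨h2, h1, h0⟩

lemma myIndep4 (Q : ℕ → Polynomial ℂ) (hQ : MonicPS Q) (n : ℕ) (e3 e2 e1 e0 : ℂ)
    (h : C e3 * Q (n+3) + C e2 * Q (n+2) + C e1 * Q (n+1) + C e0 * Q n = 0) :
    e3 = 0 ∧ e2 = 0 ∧ e1 = 0 ∧ e0 = 0 := by
  have h3 : e3 = 0 := by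
    have := congrArg (fun p => Polynomial.coeff p (n+3)) h
    simpa [coeff_add, coeffQ1 Q hQ, coeffQ0 Q hQ _ (by omega : n+2 < n+3),
      coeffQ0 Q hQ _ (by omega : n+1 < n+3), coeffQ0 Q hQ _ (by omega : n < n+3)] using this
  rw [h3] at h; simp only [map_zero, zero_mul, zero_add] at h
  obtain ⟨a, b, c⟩ := myIndep3 Q hQ n e2 e1 e0 h
  exact ⟨h3, a, b, c⟩

lemma myIndep5 (Q : ℕ → Polynomial ℂ) (hQ : MonicPS Q) (n : ℕ) (e4 e3 e2 e1 e0 : ℂ)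
    (h : C e4 * Q (n+4) + C e3 * Q (n+3) + C e2 * Q (n+2) + C e1 * Q (n+1) + C e0 * Q n = 0) :
    e4 = 0 ∧ e3 = 0 ∧ e2 = 0 ∧ e1 = 0 ∧ e0 = 0 := by
  have h4 : e4 = 0 := by
    have := congrArg (fun p => Polynomial.coeff p (n+4)) h
    simpa [coeff_add, coeffQ1 Q hQ, coeffQ0 Q hQ _ (by omega : n+3 < n+4),
      coeffQ0 Q hQ _ (by omega : n+2 < n+4), coeffQ0 Q hQ _ (by omega : n+1 < n+4),
      coeffQ0 Q hQ _ (by omega : n < n+4)] using this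
  rw [h4] at h; simp only [map_zero, zero_mul, zero_add] at h
  obtain ⟨a, b, c, d⟩ := myIndep4 Q hQ n e3 e2 e1 e0 h
  exact ⟨h4, a, b, c, d⟩

theorem structure_relations_coefficient_system
    (ω : ℂ) (hω : ω ≠ 0) (P Q : ℕ → Polynomial ℂ) (hP : MonicPS P)
    (β γ tβ tγ : ℕ → ℂ) (hPr : TTR P β γ)
    (hQ : ∀ n, Q n = ((n : ℂ) + 1)⁻¹ • Dw ω (P (n + 1)))
    (hQr : TTR Q tβ tγ) (htγ0 : tγ 0 = 0)
    (a2 a1 a0 : ℂ) (α2 α1 α0 : ℕ → ℂ)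
    (hstruct1 : ∀ n : ℕ,
        (C a2 * X ^ 2 + C a1 * X + C a0) * Q n
          = C (α2 (n + 2)) * P (n + 2) + C (α1 (n + 1)) * P (n + 1) + C (α0 n) * P n)
    (ta1 ta0 : ℕ → ℂ)
    (hstruct2 : ∀ n : ℕ,
        P (n + 2) = Q (n + 2) + C (ta1 (n + 1)) * Q (n + 1) + C (ta0 n) * Q n)
    (hstruct2' : P 1 = Q 1 + C (ta1 0)) :
    (∀ n : ℕ, α2 (n + 2) = a2) ∧
    (∀ n : ℕ, α1 (n + 1) + a2 * ta1 (n + 1) = a2 * (tβ (n + 1) + tβ n) + a1) ∧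
    (∀ n : ℕ, α1 (n + 1) * ta1 n + a2 * ta0 n + α0 n
        = a2 * (tγ (n + 1) + tγ n + (tβ n) ^ 2) + a1 * tβ n + a0) ∧
    (∀ n : ℕ, 1 ≤ n →
        α1 (n + 1) * ta0 (n - 1) + α0 n * ta1 (n - 1)
          = a2 * tγ n * (tβ n + tβ (n - 1)) + a1 * tγ n) ∧
    (∀ n : ℕ, 1 ≤ n → α0 (n + 1) * ta0 (n - 1) = a2 * tγ (n + 1) * tγ n) := by
  have hQm : MonicPS Q := monicPS_of_ttr Q tβ tγ hQr
  have indep3 := myIndep3 Q hQm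
  have indep4 := myIndep4 Q hQm
  have indep5 := myIndep5 Q hQm
  have hQ0 : Q 0 = 1 := hQr.1
  have hXr : ∀ k : ℕ, X * Q (k+1) = Q (k+2) + C (tβ (k+1)) * Q (k+1) + C (tγ (k+1)) * Q k := by
    intro k; linear_combination - hQr.2.2 k
  have hX0 : X * Q 0 = Q 1 + C (tβ 0) * Q 0 := by
    rw [hQr.1, hQr.2.1]; ring
  -- generic case (covers n = m+2 of hstruct1)
  have gen : ∀ m : ℕ,
      α2 (m+4) - a2 = 0 ∧
      (α2 (m+4) * ta1 (m+3) + α1 (m+3) - a2 * (tβ (m+3) + tβ (m+2)) - a1 = 0) ∧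
      (α2 (m+4) * ta0 (m+2) + α1 (m+3) * ta1 (m+2) + α0 (m+2)
        - a2 * (tγ (m+3) + tγ (m+2) + tβ (m+2)^2) - a1 * tβ (m+2) - a0 = 0) ∧
      (α1 (m+3) * ta0 (m+1) + α0 (m+2) * ta1 (m+1)
        - a2 * tγ (m+2) * (tβ (m+2) + tβ (m+1)) - a1 * tγ (m+2) = 0) ∧
      (α0 (m+2) * ta0 m - a2 * tγ (m+2) * tγ (m+1) = 0) := by
    intro m
    have H : (C a2 * X ^ 2 + C a1 * X + C a0) * Q (m+2)
        = C (α2 (m+4)) * P (m+4) + C (α1 (m+3)) * P (m+3) + C (α0 (m+2)) * P (m+2) :=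
      hstruct1 (m+2)
    have S2 : P (m+4) = Q (m+4) + C (ta1 (m+3)) * Q (m+3) + C (ta0 (m+2)) * Q (m+2) :=
      hstruct2 (m+2)
    have S1 : P (m+3) = Q (m+3) + C (ta1 (m+2)) * Q (m+2) + C (ta0 (m+1)) * Q (m+1) :=
      hstruct2 (m+1)
    have S0 : P (m+2) = Q (m+2) + C (ta1 (m+1)) * Q (m+1) + C (ta0 m) * Q m := hstruct2 m
    have X2 : X * Q (m+3) = Q (m+4) + C (tβ (m+3)) * Q (m+3) + C (tγ (m+3)) * Q (m+2) :=
      hXr (m+2)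
    have X1 : X * Q (m+2) = Q (m+3) + C (tβ (m+2)) * Q (m+2) + C (tγ (m+2)) * Q (m+1) :=
      hXr (m+1)
    have X0 : X * Q (m+1) = Q (m+2) + C (tβ (m+1)) * Q (m+1) + C (tγ (m+1)) * Q m := hXr m
    exact indep5 m _ _ _ _ _ (by
      simp only [map_sub, map_add, map_mul, map_pow]
      linear_combination (-(C (α2 (m+4)))) * S2 - C (α1 (m+3)) * S1 - C (α0 (m+2)) * S0
        - H + C a2 * X2 + (C a2 * X + C a2 * C (tβ (m+2)) + C a1) * X1
        + C a2 * C (tγ (m+2)) * X0)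
  have case1 :
      α2 3 - a2 = 0 ∧
      (α2 3 * ta1 2 + α1 2 - a2 * (tβ 2 + tβ 1) - a1 = 0) ∧
      (α2 3 * ta0 1 + α1 2 * ta1 1 + α0 1
        - a2 * (tγ 2 + tγ 1 + tβ 1 ^ 2) - a1 * tβ 1 - a0 = 0) ∧
      (α1 2 * ta0 0 + α0 1 * ta1 0 - a2 * tγ 1 * (tβ 1 + tβ 0) - a1 * tγ 1 = 0) := by
    have H : (C a2 * X ^ 2 + C a1 * X + C a0) * Q 1
        = C (α2 3) * P 3 + C (α1 2) * P 2 + C (α0 1) * P 1 := hstruct1 1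
    have S2 : P 3 = Q 3 + C (ta1 2) * Q 2 + C (ta0 1) * Q 1 := hstruct2 1
    have S1 : P 2 = Q 2 + C (ta1 1) * Q 1 + C (ta0 0) * Q 0 := hstruct2 0
    have X2 : X * Q 2 = Q 3 + C (tβ 2) * Q 2 + C (tγ 2) * Q 1 := hXr 1
    have X1 : X * Q 1 = Q 2 + C (tβ 1) * Q 1 + C (tγ 1) * Q 0 := hXr 0
    exact indep4 0 _ _ _ _ (by
      simp only [map_sub, map_add, map_mul, map_pow]
      linear_combination (-(C (α2 3))) * S2 - C (α1 2) * S1 - C (α0 1) * hstruct2'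
        + C (α0 1) * C (ta1 0) * hQ0
        - H + C a2 * X2 + (C a2 * X + C a2 * C (tβ 1) + C a1) * X1
        + C a2 * C (tγ 1) * hX0)
  have case0 :
      α2 2 - a2 = 0 ∧
      (α2 2 * ta1 1 + α1 1 - a2 * (tβ 1 + tβ 0) - a1 = 0) ∧
      (α2 2 * ta0 0 + α1 1 * ta1 0 + α0 0
        - a2 * (tγ 1 + tβ 0 ^ 2) - a1 * tβ 0 - a0 = 0) := by
    have H : (C a2 * X ^ 2 + C a1 * X + C a0) * Q 0
        = C (α2 2) * P 2 + C (α1 1) * P 1 + C (α0 0) * P 0 := hstruct1 0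
    have S1 : P 2 = Q 2 + C (ta1 1) * Q 1 + C (ta0 0) * Q 0 := hstruct2 0
    have X1 : X * Q 1 = Q 2 + C (tβ 1) * Q 1 + C (tγ 1) * Q 0 := hXr 0
    have hP0 : P 0 = 1 := hPr.1
    exact indep3 0 _ _ _ (by
      simp only [map_sub, map_add, map_mul, map_pow]
      linear_combination (-(C (α2 2))) * S1 - C (α1 1) * hstruct2'
        + C (α1 1) * C (ta1 0) * hQ0 - C (α0 0) * hP0 + C (α0 0) * hQ0
        - H + C a2 * X1 + (C a2 * X + C a2 * C (tβ 0) + C a1) * hX0)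
  refine ⟨?_, ?_, ?_, ?_, ?_⟩
  · intro n
    match n with
    | 0 => linear_combination case0.1
    | 1 => linear_combination case1.1
    | (m+2) =>
      show α2 (m+4) = a2
      linear_combination (gen m).1
  · intro n
    match n with
    | 0 => linear_combination case0.2.1 - ta1 1 * case0.1
    | 1 => linear_combination case1.2.1 - ta1 2 * case1.1
    | (m+2) =>
      show α1 (m+3) + a2 * ta1 (m+3) = a2 * (tβ (m+3) + tβ (m+2)) + a1
      linear_combination (gen m).2.1 - ta1 (m+3) * (gen m).1
  · intro n
    match n with
    | 0 => linear_combination case0.2.2 - ta0 0 * case0.1 - a2 * htγ0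
    | 1 => linear_combination case1.2.2.1 - ta0 1 * case1.1
    | (m+2) =>
      show α1 (m+3) * ta1 (m+2) + a2 * ta0 (m+2) + α0 (m+2)
        = a2 * (tγ (m+3) + tγ (m+2) + tβ (m+2) ^ 2) + a1 * tβ (m+2) + a0
      linear_combination (gen m).2.2.1 - ta0 (m+2) * (gen m).1
  · intro n hn
    match n, hn with
    | 1, _ => linear_combination case1.2.2.2
    | (m+2), _ =>
      show α1 (m+3) * ta0 (m+1) + α0 (m+2) * ta1 (m+1)
        = a2 * tγ (m+2) * (tβ (m+2) + tβ (m+1)) + a1 * tγ (m+2)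
      linear_combination (gen m).2.2.2.1
  · intro n hn
    match n, hn with
    | (m+1), _ =>
      show α0 (m+2) * ta0 m = a2 * tγ (m+2) * tγ (m+1)
      linear_combination (gen m).2.2.2.2
end

section
/- Let {R_n}_{n≥0}, {S_n}_{n≥0}, {T_n}_{n≥0} be monic PSs with S_n = (n+1)^{-1} D_ω R_{n+1} and T_n = (n+1)^{-1} D_ω S_{n+1} for all n ≥ 0. Suppose there are complex sequences (a_n), (b_n), (c_n), (d_n) with R_{n+2} = S_{n+2} + a_{n+1}S_{n+1} + b_n S_n for all n ≥ 0 and S_{n+2} = T_{n+2} + c_{n+1}T_{n+1} + d_n T_n for all n ≥ 0. Then (n+3)c_{n+1} = (n+2)a_{n+2} and (n+3)d_n = (n+1)b_{n+1} for all n ≥ 0. -/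
open Polynomial

lemma Dw_eq_aux (ω : ℂ) (P Q : ℕ → Polynomial ℂ)
    (h : ∀ n, Q n = ((n : ℂ) + 1)⁻¹ • Dw ω (P (n + 1))) (m : ℕ) :
    Dw ω (P (m + 1)) = ((m : ℂ) + 1) • Q m := by
  have hm : ((m : ℂ) + 1) ≠ 0 := Nat.cast_add_one_ne_zero m
  rw [h m, smul_smul, mul_inv_cancel₀ hm, one_smul]

theorem derivative_structure_coefficients_link
    (ω : ℂ) (hω : ω ≠ 0) (R S T : ℕ → Polynomial ℂ)
    (hR : MonicPS R) (hS : MonicPS S) (hT : MonicPS T)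
    (hS' : ∀ n, S n = ((n : ℂ) + 1)⁻¹ • Dw ω (R (n + 1)))
    (hT' : ∀ n, T n = ((n : ℂ) + 1)⁻¹ • Dw ω (S (n + 1)))
    (a b c d : ℕ → ℂ)
    (hRS : ∀ n : ℕ, R (n + 2) = S (n + 2) + C (a (n + 1)) * S (n + 1) + C (b n) * S n)
    (hST : ∀ n : ℕ, S (n + 2) = T (n + 2) + C (c (n + 1)) * T (n + 1) + C (d n) * T n) :
    ∀ n : ℕ,
      ((n : ℂ) + 3) * c (n + 1) = ((n : ℂ) + 2) * a (n + 2) ∧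
      ((n : ℂ) + 3) * d n = ((n : ℂ) + 1) * b (n + 1) := by
  intro n
  have h1 : Dw ω (R (n + 3)) = ((n : ℂ) + 3) • S (n + 2) := by
    have := Dw_eq_aux ω R S hS' (n + 2)
    push_cast at this
    rw [show n + 2 + 1 = n + 3 from rfl] at this
    convert this using 2 <;> ring
  have h2 : Dw ω (S (n + 3)) = ((n : ℂ) + 3) • T (n + 2) := by
    have := Dw_eq_aux ω S T hT' (n + 2)
    push_cast at this
    rw [show n + 2 + 1 = n + 3 from rfl] at this
    convert this using 2 <;> ring
  have h3 : Dw ω (S (n + 2)) = ((n : ℂ) + 2) • T (n + 1) := by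
    have := Dw_eq_aux ω S T hT' (n + 1)
    push_cast at this
    rw [show n + 1 + 1 = n + 2 from rfl] at this
    convert this using 2 <;> ring
  have h4 : Dw ω (S (n + 1)) = ((n : ℂ) + 1) • T n := Dw_eq_aux ω S T hT' n
  have e1 : Dw ω (R (n + 3)) =
      Dw ω (S (n + 3)) + C (a (n + 2)) * Dw ω (S (n + 2)) +
        C (b (n + 1)) * Dw ω (S (n + 1)) := by
    have := hRS (n + 1)
    rw [show n + 1 + 2 = n + 3 from rfl, show n + 1 + 1 = n + 2 from rfl] at this
    rw [this]
    simp only [Dw, add_comp, mul_comp, C_comp]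
    ring
  rw [h1, h2, h3, h4] at e1
  simp only [smul_eq_C_mul] at e1
  have key : C ((n : ℂ) + 3) * C (c (n + 1)) * T (n + 1) +
      C ((n : ℂ) + 3) * C (d n) * T n =
      C ((n : ℂ) + 2) * C (a (n + 2)) * T (n + 1) +
        C ((n : ℂ) + 1) * C (b (n + 1)) * T n := by
    linear_combination e1 - C ((n : ℂ) + 3) * hST n
  have hTm := fun m => (hT m).1
  have hTd := fun m => (hT m).2
  have ht1 : (T (n + 1)).coeff (n + 1) = 1 := by
    have := (hTm (n + 1)).coeff_natDegree
    rwa [hTd (n + 1)] at this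
  have ht0 : (T n).coeff n = 1 := by
    have := (hTm n).coeff_natDegree
    rwa [hTd n] at this
  have ht2 : (T n).coeff (n + 1) = 0 := by
    apply coeff_eq_zero_of_natDegree_lt
    rw [hTd n]; omega
  have eq1 : ((n : ℂ) + 3) * c (n + 1) = ((n : ℂ) + 2) * a (n + 2) := by
    have := congrArg (fun p => Polynomial.coeff p (n + 1)) key
    simp only [mul_assoc, coeff_add, coeff_C_mul, ht1, ht2, mul_one, mul_zero,
      add_zero] at this
    linear_combination this
  refine ⟨eq1, ?_⟩
  have := congrArg (fun p => Polynomial.coeff p n) key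
  simp only [mul_assoc, coeff_add, coeff_C_mul, ht0, mul_one] at this
  set t := (T (n + 1)).coeff n
  linear_combination this - t * eq1
end
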